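/- Let α ∈ T_n be an idempotent of rank l with image A. An element β ∈ T_n has stable rank l in (T_n, *_α) if and only if the restriction of βα to A is a bijection of A. -/

import Mathlib

/-- The sandwich multiplication `β *_α γ = βαγ` (left-to-right composition). -/
def vmul {n : ℕ} (α β γ : Fin n → Fin n) : Fin n → Fin n :=
  fun x => γ (α (β x))

/-- `vpow α β m = β^{*(m+1)}`, the positive `*_α`-powers of `β`. -/
def vpow {n : ℕ} (α β : Fin n → Fin n) : ℕ → (Fin n → Fin n)
  | 0 => β
  | m + 1 => vmul α (vpow α β m) β

/-- The rank of a transformation: the cardinality of its image. -/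
def rank {n : ℕ} (f : Fin n → Fin n) : ℕ := (Finset.image f Finset.univ).card

/-- The restriction of `βα` to `A = im(α)`, as a map `A → A`. -/
def phibar {n : ℕ} (α β : Fin n → Fin n) : Set.range α → Set.range α :=
  fun x => ⟨α (β x.1), ⟨β x.1, rfl⟩⟩

/-!
Let `g = βα` (in Lean, `α ∘ β`) and `A = im α`. Then `β^{*(m+1)} = (βα)^m β`, so its image is
`β(im gᵐ)`. For `m ≥ 1` we have `im gᵐ ⊆ A`, hence the rank is at most `|A| = l`, with equality
exactly when `im gᵐ = A` and `β` is injective on it. The images `im gᵐ` settle at `A` precisely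
when `g(A) = A`, i.e. when `g|_A` is surjective, which on the finite set `A` means bijective;
and injectivity of `g|_A = α ∘ β|_A` forces injectivity of `β` on `A`.
-/

open Function Set

section Iterate

variable {X : Type*} {g : X → X} {A : Set X}

theorem range_iterate_succ_eq_of_image_eq (hg : range g ⊆ A) (hA : g '' A = A) (m : ℕ) :
    range g^[m + 1] = A := by
  induction m with
  | zero => rw [iterate_one]; exact hg.antisymm (hA ▸ image_subset_range g A)
  | succ m ih => rw [iterate_succ', range_comp, ih, hA]

theorem image_eq_of_range_iterate_eq {m : ℕ} (h₁ : range g^[m + 1] = A)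
    (h₂ : range g^[m + 2] = A) : g '' A = A := by
  rwa [iterate_succ' g (m + 1), range_comp, h₁] at h₂

end Iterate

section SandwichPower

variable {n : ℕ} (α β : Fin n → Fin n)

theorem rank_eq_ncard_range (f : Fin n → Fin n) : rank f = (range f).ncard := by
  rw [rank, ← ncard_coe_finset, Finset.coe_image, Finset.coe_univ, image_univ]

theorem vpow_eq_comp_iterate (m : ℕ) : vpow α β m = β ∘ (α ∘ β)^[m] := by
  induction m with
  | zero => rfl
  | succ m ih =>
    funext x
    simp only [vpow, vmul, ih, comp_apply, iterate_succ_apply']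

theorem rank_vpow (m : ℕ) : rank (vpow α β m) = (β '' range (α ∘ β)^[m]).ncard := by
  rw [rank_eq_ncard_range, vpow_eq_comp_iterate, range_comp]

theorem mapsTo_comp_range : MapsTo (α ∘ β) (range α) (range α) :=
  fun x _ => mem_range_self (β x)

theorem phibar_eq_restrict : phibar α β = (mapsTo_comp_range α β).restrict := rfl

theorem range_iterate_eq_of_rank_vpow_eq {m : ℕ} (h : rank (vpow α β (m + 1)) = rank α) :
    range (α ∘ β)^[m + 1] = range α := by
  have hsub : range (α ∘ β)^[m + 1] ⊆ range α := by
    rw [iterate_succ']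
    exact range_comp_subset_range _ α
  refine eq_of_subset_of_ncard_le hsub ?_
  rw [rank_vpow, rank_eq_ncard_range] at h
  calc (range α).ncard = (β '' range (α ∘ β)^[m + 1]).ncard := h.symm
    _ ≤ (range (α ∘ β)^[m + 1]).ncard := ncard_image_le

end SandwichPower

theorem stable_rank_top_iff_bijective_general {n l : ℕ} (α : Fin n → Fin n)
    (hl : rank α = l) (β : Fin n → Fin n) :
    (∃ M : ℕ, ∀ m ≥ M, rank (vpow α β m) = l) ↔
      Function.Bijective (phibar α β) := by
  subst hl
  have hmaps := mapsTo_comp_range α β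
  rw [phibar_eq_restrict]
  constructor
  · rintro ⟨M, hM⟩
    have h₁ := range_iterate_eq_of_rank_vpow_eq α β (hM (M + 1) (by omega))
    have h₂ := range_iterate_eq_of_rank_vpow_eq α β (hM (M + 2) (by omega))
    have hsurj : SurjOn (α ∘ β) (range α) (range α) := (image_eq_of_range_iterate_eq h₁ h₂).ge
    exact Finite.surjective_iff_bijective.mp (hmaps.restrict_surjective_iff.mpr hsurj)
  · intro hbij
    have hA : (α ∘ β) '' range α = range α :=
      (hmaps.restrict_surjective_iff.mp hbij.surjective).image_eq_of_mapsTo hmaps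
    have hinj : InjOn β (range α) := (hmaps.restrict_inj.mp hbij.injective).of_comp
    refine ⟨1, fun m hm => ?_⟩
    obtain ⟨k, rfl⟩ := Nat.exists_eq_add_of_le' hm
    rw [rank_vpow, range_iterate_succ_eq_of_image_eq (range_comp_subset_range β α) hA,
      hinj.ncard_image, rank_eq_ncard_range]

/-- `β` has stable rank `l = rank α` in `(T_n, *_α)` iff the restriction
of `βα` to `A = im(α)` is a bijection of `A`. -/
theorem stable_rank_top_iff_bijective {n l : ℕ} (α : Fin n → Fin n)
    (hα : ∀ x, α (α x) = α x) (hl : rank α = l) (β : Fin n → Fin n) :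
    (∃ M : ℕ, ∀ m ≥ M, rank (vpow α β m) = l) ↔
      Function.Bijective (phibar α β) :=
  stable_rank_top_iff_bijective_general α hl β
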